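/- Let f : ℝ^d → ℝ admit the Fourier representation f(x) = ∫_{ℝ^d} f̂(ω) e^{iω·x} dω with f̂ ∈ L¹(ℝ^d), let p be a probability density on ℝ^d with p(ω) > 0 for a.e. ω with f̂(ω) ≠ 0 and ∫ |f̂(ω)|²/p(ω) dω < ∞, let μ be a probability measure on ℝ^d, and let ω_1, …, ω_K be i.i.d. with density p. Then the expected generalization error of the best random Fourier feature network with these frequencies satisfies E_ω[ inf_{c ∈ ℂ^K} ∫_{ℝ^d} | f(x) − Re Σ_{k=1}^K c_k e^{iω_k·x} |² dμ(x) ] ≤ K^{-1} ∫_{ℝ^d} |f̂(ω)|²/p(ω) dω. -/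

import Mathlib

/-! Fix the frequencies and take the amplitudes `c_k = K⁻¹ f̂(ω_k) / p(ω_k)`; the infimum is at
most the error of this network. At a data point `x` the network is the empirical mean of `K`
independent copies of `Re (f̂(ω) / p(ω) e^{iω·x})` with `ω ~ p`: by importance sampling this is an
unbiased estimator of `f x` with second moment at most `∫ |f̂|² / p`, so its mean squared error
is at most `K⁻¹ ∫ |f̂|² / p`. Exchanging the expectations over `x` and over the frequencies
(Fubini) gives the bound. -/

open MeasureTheory ProbabilityTheory

section MonteCarlo

variable {Ω ι : Type*} [MeasurableSpace Ω] {P : Measure Ω} [IsProbabilityMeasure P]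
  [Fintype ι]

theorem integral_sq_sub_average_le [Nonempty ι] {X : ι → Ω → ℝ} (hX : ∀ k, MemLp (X k) 2 P)
    (hindep : Pairwise fun j k => X j ⟂ᵢ[P] X k) {m A : ℝ} (hmean : ∀ k, P[X k] = m)
    (hsq : ∀ k, P[X k ^ 2] ≤ A) :
    ∫ w, (m - (Fintype.card ι : ℝ)⁻¹ * ∑ k, X k w) ^ 2 ∂P ≤ A / Fintype.card ι := by
  have hn : (0 : ℝ) < Fintype.card ι := by positivity
  have hsum : MemLp (∑ k, X k) 2 P := memLp_finsetSum' _ fun k _ => hX k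
  have hmean_avg : P[fun w => (Fintype.card ι : ℝ)⁻¹ * ∑ k, X k w] = m := by
    rw [integral_const_mul, integral_finsetSum _ fun k _ => (hX k).integrable one_le_two]
    simp only [hmean, Finset.sum_const, Finset.card_univ, nsmul_eq_mul]
    field_simp
  calc ∫ w, (m - (Fintype.card ι : ℝ)⁻¹ * ∑ k, X k w) ^ 2 ∂P
      = Var[fun w => (Fintype.card ι : ℝ)⁻¹ * (∑ k, X k) w; P] := by
        rw [variance_eq_integral (hsum.const_mul _).aestronglyMeasurable.aemeasurable]
        simp only [Finset.sum_apply, hmean_avg]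
        congr 1 with w
        ring
    _ = (Fintype.card ι : ℝ)⁻¹ ^ 2 * ∑ k, Var[X k; P] := by
        rw [variance_const_mul, IndepFun.variance_sum (fun k _ => hX k)
          fun j _ k _ hjk => hindep hjk]
    _ ≤ (Fintype.card ι : ℝ)⁻¹ ^ 2 * ∑ _k : ι, A := by
        gcongr with k
        exact (variance_le_expectation_sq (hX k).aestronglyMeasurable).trans (hsq k)
    _ = A / Fintype.card ι := by
        rw [Finset.sum_const, Finset.card_univ, nsmul_eq_mul]
        field_simp

variable {E : Type*} [MeasurableSpace E] {ν : Measure E} {X : ι → Ω → E} {φ : E → ℝ}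

theorem integral_comp_sq_sub_average_le [Nonempty ι] (hX : ∀ k, MeasurePreserving (X k) P ν)
    (hindep : iIndepFun X P) (hφ : Measurable φ) (hφ2 : MemLp φ 2 ν) {m A : ℝ}
    (hmean : ∫ y, φ y ∂ν = m) (hsq : ∫ y, φ y ^ 2 ∂ν ≤ A) :
    ∫ w, (m - (Fintype.card ι : ℝ)⁻¹ * ∑ k, φ (X k w)) ^ 2 ∂P ≤ A / Fintype.card ι := by
  refine integral_sq_sub_average_le (X := fun k => φ ∘ X k)
    (fun k => hφ2.comp_measurePreserving (hX k))
    (fun j k hjk => (hindep.indepFun hjk).comp hφ hφ) (fun k => ?_) (fun k => ?_)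
  · rw [← hmean, ← (hX k).map_eq, integral_map (hX k).aemeasurable hφ.aestronglyMeasurable]
    rfl
  · rwa [← (hX k).map_eq, integral_map (hX k).aemeasurable
      (hφ.pow_const 2).aestronglyMeasurable] at hsq

theorem integrable_comp_sq_sub_average (hX : ∀ k, MeasurePreserving (X k) P ν)
    (hφ2 : MemLp φ 2 ν) (m c : ℝ) :
    Integrable (fun w => (m - c * ∑ k, φ (X k w)) ^ 2) P := by
  have hsum : MemLp (fun w => ∑ k, φ (X k w)) 2 P :=
    memLp_finsetSum _ fun k _ => hφ2.comp_measurePreserving (hX k)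
  exact ((memLp_const m).sub (hsum.const_mul c)).integrable_sq

end MonteCarlo

theorem integral_le_of_le_integral_of_forall_integral_le {α β : Type*} [MeasurableSpace α]
    [MeasurableSpace β] {μ : Measure α} {ν : Measure β} [SFinite μ] [IsProbabilityMeasure ν]
    {F : α → β → ℝ} {G : α → ℝ} {B : ℝ} (hF : Measurable (Function.uncurry F))
    (hF0 : ∀ a b, 0 ≤ F a b) (hG0 : ∀ a, 0 ≤ G a) (hGF : ∀ a, G a ≤ ∫ b, F a b ∂ν)
    (hFint : ∀ b, Integrable (F · b) μ) (hFB : ∀ b, ∫ a, F a b ∂μ ≤ B) :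
    ∫ a, G a ∂μ ≤ B := by
  have hprod : Integrable (Function.uncurry F) (μ.prod ν) := by
    refine ⟨hF.aestronglyMeasurable, ?_⟩
    rw [hasFiniteIntegral_iff_ofReal (f := Function.uncurry F) (ae_of_all _ fun q => hF0 q.1 q.2)]
    calc ∫⁻ q, ENNReal.ofReal (Function.uncurry F q) ∂μ.prod ν
        = ∫⁻ b, ∫⁻ a, ENNReal.ofReal (F a b) ∂μ ∂ν :=
          lintegral_prod_symm _ hF.ennreal_ofReal.aemeasurable
      _ ≤ ∫⁻ _b, ENNReal.ofReal B ∂ν := lintegral_mono fun b => by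
          rw [← ofReal_integral_eq_lintegral_ofReal (hFint b) (ae_of_all _ (hF0 · b))]
          exact ENNReal.ofReal_le_ofReal (hFB b)
      _ < ⊤ := by simp
  calc ∫ a, G a ∂μ ≤ ∫ a, ∫ b, F a b ∂ν ∂μ :=
        integral_mono_of_nonneg (ae_of_all _ hG0) hprod.integral_prod_left (ae_of_all _ hGF)
    _ = ∫ b, ∫ a, F a b ∂μ ∂ν := integral_integral_swap hprod
    _ ≤ ∫ _b, B ∂ν := integral_mono hprod.integral_prod_right (integrable_const B) hFB
    _ = B := by simp

section ImportanceSampling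

variable {E : Type*} [MeasurableSpace E] {ρ : Measure E} {p : E → ℝ}

theorem integral_withDensity_ofReal (hp : Measurable p) (hp0 : ∀ y, 0 ≤ p y) (F : E → ℝ) :
    ∫ y, F y ∂ρ.withDensity (fun y => ENNReal.ofReal (p y)) = ∫ y, p y * F y ∂ρ := by
  rw [integral_withDensity_eq_integral_toReal_smul hp.ennreal_ofReal
    (ae_of_all _ fun _ => ENNReal.ofReal_lt_top)]
  simp [ENNReal.toReal_ofReal (hp0 _)]

theorem integrable_withDensity_ofReal_iff (hp : Measurable p) (hp0 : ∀ y, 0 ≤ p y)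
    {F : E → ℝ} :
    Integrable F (ρ.withDensity fun y => ENNReal.ofReal (p y)) ↔
      Integrable (fun y => p y * F y) ρ := by
  rw [integrable_withDensity_iff_integrable_smul' hp.ennreal_ofReal
    (ae_of_all _ fun _ => ENNReal.ofReal_lt_top)]
  simp [ENNReal.toReal_ofReal (hp0 _)]

theorem exists_measurable_ofReal_mul_ae_eq {fhat : E → ℂ} (hfhat : AEStronglyMeasurable fhat ρ)
    (hp : Measurable p) (hpos : ∀ᵐ y ∂ρ, fhat y ≠ 0 → 0 < p y) :
    ∃ g : E → ℂ, Measurable g ∧ ∀ᵐ y ∂ρ, (p y : ℂ) * g y = fhat y := by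
  refine ⟨fun y => hfhat.mk fhat y / p y,
    hfhat.stronglyMeasurable_mk.measurable.div (Complex.measurable_ofReal.comp hp), ?_⟩
  filter_upwards [hfhat.ae_eq_mk, hpos] with y hmk hy
  rw [← hmk]
  by_cases h0 : fhat y = 0
  · simp [h0]
  · exact mul_div_cancel₀ _ (by exact_mod_cast (hy h0).ne')

theorem mul_re_mul_sq_le_norm_sq_div {p : ℝ} (hp : 0 ≤ p) (a b : ℂ) (hb : ‖b‖ ≤ 1) :
    p * (a * b).re ^ 2 ≤ ‖(p : ℂ) * a‖ ^ 2 / p := by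
  rcases hp.eq_or_lt with rfl | hp
  · simp
  have hre : (a * b).re ^ 2 ≤ ‖a‖ ^ 2 := by
    refine sq_le_sq.2 ((Complex.abs_re_le_norm _).trans ?_)
    rw [abs_norm, norm_mul]
    exact mul_le_of_le_one_right (norm_nonneg a) hb
  calc p * (a * b).re ^ 2 ≤ p * ‖a‖ ^ 2 := by gcongr
    _ = ‖(p : ℂ) * a‖ ^ 2 / p := by
      rw [norm_mul, Complex.norm_real, Real.norm_of_nonneg hp.le]
      field_simp

variable {fhat g h : E → ℂ}

theorem ae_mul_re_mul_sq_le (hp0 : ∀ y, 0 ≤ p y) (hpg : ∀ᵐ y ∂ρ, (p y : ℂ) * g y = fhat y)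
    (hh : ∀ y, ‖h y‖ ≤ 1) :
    ∀ᵐ y ∂ρ, p y * (g y * h y).re ^ 2 ≤ ‖fhat y‖ ^ 2 / p y := by
  filter_upwards [hpg] with y hy
  rw [← hy]
  exact mul_re_mul_sq_le_norm_sq_div (hp0 y) _ _ (hh y)

theorem memLp_re_mul_withDensity (hp : Measurable p) (hp0 : ∀ y, 0 ≤ p y)
    (hpg : ∀ᵐ y ∂ρ, (p y : ℂ) * g y = fhat y) (hg : Measurable g) (hhm : Measurable h)
    (hh : ∀ y, ‖h y‖ ≤ 1) (hA : Integrable (fun y => ‖fhat y‖ ^ 2 / p y) ρ) :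
    MemLp (fun y => (g y * h y).re) 2 (ρ.withDensity fun y => ENNReal.ofReal (p y)) := by
  refine (memLp_two_iff_integrable_sq (by fun_prop)).2 ?_
  rw [integrable_withDensity_ofReal_iff hp hp0]
  refine hA.mono' (by fun_prop) ?_
  filter_upwards [ae_mul_re_mul_sq_le hp0 hpg hh] with y hy
  rwa [Real.norm_of_nonneg (mul_nonneg (hp0 y) (sq_nonneg _))]

theorem integral_re_mul_sq_withDensity_le (hp : Measurable p) (hp0 : ∀ y, 0 ≤ p y)
    (hpg : ∀ᵐ y ∂ρ, (p y : ℂ) * g y = fhat y) (hh : ∀ y, ‖h y‖ ≤ 1)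
    (hA : Integrable (fun y => ‖fhat y‖ ^ 2 / p y) ρ) :
    ∫ y, (g y * h y).re ^ 2 ∂ρ.withDensity (fun y => ENNReal.ofReal (p y))
      ≤ ∫ y, ‖fhat y‖ ^ 2 / p y ∂ρ := by
  rw [integral_withDensity_ofReal hp hp0]
  exact integral_mono_of_nonneg (ae_of_all _ fun y => mul_nonneg (hp0 y) (sq_nonneg _)) hA
    (ae_mul_re_mul_sq_le hp0 hpg hh)

theorem integral_re_mul_withDensity (hp : Measurable p) (hp0 : ∀ y, 0 ≤ p y)
    (hpg : ∀ᵐ y ∂ρ, (p y : ℂ) * g y = fhat y) (hfh : Integrable (fun y => fhat y * h y) ρ) :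
    ∫ y, (g y * h y).re ∂ρ.withDensity (fun y => ENNReal.ofReal (p y))
      = (∫ y, fhat y * h y ∂ρ).re := by
  rw [integral_withDensity_ofReal hp hp0, ← RCLike.re_eq_complex_re, ← integral_re hfh]
  refine integral_congr_ae ?_
  filter_upwards [hpg] with y hy
  rw [← hy, mul_assoc, RCLike.re_eq_complex_re, Complex.re_ofReal_mul]

end ImportanceSampling

noncomputable def planeWave {d : ℕ} (y x : Fin d → ℝ) : ℂ :=
  Complex.exp (Complex.I * ((∑ i, y i * x i : ℝ) : ℂ))

theorem norm_planeWave {d : ℕ} (y x : Fin d → ℝ) : ‖planeWave y x‖ = 1 := by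
  simp [planeWave, Complex.norm_exp]

@[fun_prop]
theorem continuous_planeWave {d : ℕ} :
    Continuous fun q : (Fin d → ℝ) × (Fin d → ℝ) => planeWave q.1 q.2 := by
  unfold planeWave
  fun_prop

@[fun_prop]
theorem continuous_planeWave_left {d : ℕ} (x : Fin d → ℝ) :
    Continuous fun y => planeWave y x :=
  continuous_planeWave.comp (continuous_id.prodMk continuous_const)

theorem integrable_mul_planeWave {d : ℕ} {fhat : (Fin d → ℝ) → ℂ} (hfhat : Integrable fhat)
    (x : Fin d → ℝ) : Integrable fun y => fhat y * planeWave y x :=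
  hfhat.mul_bdd (continuous_planeWave_left x).aestronglyMeasurable
    (ae_of_all _ fun y => (norm_planeWave y x).le)

theorem continuous_integral_mul_planeWave {d : ℕ} {fhat : (Fin d → ℝ) → ℂ}
    (hfhat : Integrable fhat) : Continuous fun x => ∫ y, fhat y * planeWave y x := by
  refine continuous_of_dominated (bound := fun y => ‖fhat y‖)
    (fun x => (integrable_mul_planeWave hfhat x).aestronglyMeasurable)
    (fun x => ae_of_all _ fun y => ?_) hfhat.norm (ae_of_all _ fun y => ?_)
  · rw [norm_mul, norm_planeWave, mul_one]
  · fun_prop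

theorem random_fourier_features_generalization_bound_general
    {Ω : Type*} [MeasurableSpace Ω] (P : Measure Ω) [IsProbabilityMeasure P]
    (d K : ℕ) (hK : 0 < K)
    (μ : Measure (Fin d → ℝ)) [IsProbabilityMeasure μ]
    (f : (Fin d → ℝ) → ℝ) (fhat : (Fin d → ℝ) → ℂ)
    (hfhatint : Integrable fhat volume)
    (hf : ∀ x : Fin d → ℝ, (f x : ℂ)
      = ∫ y : Fin d → ℝ, fhat y * Complex.exp (Complex.I * ((∑ i, y i * x i : ℝ) : ℂ)))
    (p : (Fin d → ℝ) → ℝ) (hpmeas : Measurable p) (hpnonneg : ∀ x, 0 ≤ p x)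
    (hpos : ∀ᵐ x ∂(volume : Measure (Fin d → ℝ)), fhat x ≠ 0 → 0 < p x)
    (hA : Integrable (fun x => ‖fhat x‖ ^ 2 / p x) volume)
    (ω : Fin K → Ω → (Fin d → ℝ)) (hωmeas : ∀ k, Measurable (ω k))
    (hlaw : ∀ k, Measure.map (ω k) P
      = volume.withDensity (fun x => ENNReal.ofReal (p x)))
    (hindep : iIndepFun ω P) :
    ∫ w, (⨅ c : Fin K → ℂ,
        ∫ x, (f x - (∑ k, c k
          * Complex.exp (Complex.I * ((∑ i, ω k w i * x i : ℝ) : ℂ))).re) ^ 2 ∂μ) ∂P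
      ≤ (∫ y, ‖fhat y‖ ^ 2 / p y) / K := by
  have : Nonempty (Fin K) := ⟨⟨0, hK⟩⟩
  obtain ⟨g, hg, hpg⟩ :=
    exists_measurable_ofReal_mul_ae_eq hfhatint.aestronglyMeasurable hpmeas hpos
  have hωlaw : ∀ k, MeasurePreserving (ω k) P _ := fun k => ⟨hωmeas k, hlaw k⟩
  have hf_re : ∀ x, f x = (∫ y, fhat y * planeWave y x).re := fun x => by
    rw [← Complex.ofReal_re (f x), hf x]; rfl
  have hfeat_le : ∀ x y : Fin d → ℝ, ‖planeWave y x‖ ≤ 1 := fun x y => (norm_planeWave y x).le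
  have hfeat_L2 : ∀ x, MemLp (fun y => (g y * planeWave y x).re) 2 _ := fun x =>
    memLp_re_mul_withDensity hpmeas hpnonneg hpg hg (continuous_planeWave_left x).measurable
      (hfeat_le x) hA
  refine integral_le_of_le_integral_of_forall_integral_le (ν := μ)
    (F := fun w x => (f x - (K : ℝ)⁻¹ * ∑ k, (g (ω k w) * planeWave (ω k w) x).re) ^ 2)
    ?_ (fun _ _ => sq_nonneg _)
    (fun w => Real.iInf_nonneg fun c => integral_nonneg fun x => sq_nonneg _) (fun w => ?_)
    (fun x => integrable_comp_sq_sub_average hωlaw (hfeat_L2 x) _ _) (fun x => ?_)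
  · have hf_meas : Measurable f := by
      rw [funext hf_re]
      exact (Complex.continuous_re.comp (continuous_integral_mul_planeWave hfhatint)).measurable
    simp only [Function.uncurry_def]
    fun_prop
  · refine ciInf_le_of_le ⟨0, ?_⟩ (fun k => (((K : ℝ)⁻¹ : ℝ) : ℂ) * g (ω k w)) (le_of_eq ?_)
    · rintro _ ⟨c, rfl⟩
      exact integral_nonneg fun x => sq_nonneg _
    · refine integral_congr_ae (ae_of_all _ fun x => ?_)
      simp only [Complex.re_sum, Finset.mul_sum, mul_assoc, Complex.re_ofReal_mul]
      rfl
  · have hmean := (integral_re_mul_withDensity hpmeas hpnonneg hpg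
      (integrable_mul_planeWave hfhatint x)).trans (hf_re x).symm
    simpa using integral_comp_sq_sub_average_le hωlaw hindep (by fun_prop) (hfeat_L2 x) hmean
      (integral_re_mul_sq_withDensity_le hpmeas hpnonneg hpg (hfeat_le x) hA)

/-- Expected generalization error bound for the best one-hidden-layer random Fourier
feature network: if `f(x) = ∫ f̂(ω) e^{iω·x} dω` with `f̂ ∈ L¹`, `p` is a probability
density positive a.e. on `{f̂ ≠ 0}` with `∫ |f̂|²/p < ∞`, `μ` is a probability measure
(the data distribution), and `ω 0, …, ω (K-1)` are i.i.d. with density `p`, then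
`E_ω[inf_{c ∈ ℂ^K} ∫ |f x - Re ∑ k, c k e^{i ω k · x}|² dμ(x)] ≤ K⁻¹ ∫ |f̂|²/p`. -/
theorem random_fourier_features_generalization_bound
    {Ω : Type*} [MeasurableSpace Ω] (P : Measure Ω) [IsProbabilityMeasure P]
    (d K : ℕ) (hK : 0 < K)
    (μ : Measure (Fin d → ℝ)) [IsProbabilityMeasure μ]
    (f : (Fin d → ℝ) → ℝ) (fhat : (Fin d → ℝ) → ℂ)
    (hfhatint : Integrable fhat volume)
    (hf : ∀ x : Fin d → ℝ, (f x : ℂ)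
      = ∫ y : Fin d → ℝ, fhat y * Complex.exp (Complex.I * ((∑ i, y i * x i : ℝ) : ℂ)))
    (p : (Fin d → ℝ) → ℝ) (hpmeas : Measurable p) (hpnonneg : ∀ x, 0 ≤ p x)
    (hpprob : ∫⁻ x, ENNReal.ofReal (p x) = 1)
    (hpos : ∀ᵐ x ∂(volume : Measure (Fin d → ℝ)), fhat x ≠ 0 → 0 < p x)
    (hA : Integrable (fun x => ‖fhat x‖ ^ 2 / p x) volume)
    (ω : Fin K → Ω → (Fin d → ℝ)) (hωmeas : ∀ k, Measurable (ω k))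
    (hlaw : ∀ k, Measure.map (ω k) P
      = volume.withDensity (fun x => ENNReal.ofReal (p x)))
    (hindep : iIndepFun ω P) :
    ∫ w, (⨅ c : Fin K → ℂ,
        ∫ x, (f x - (∑ k, c k
          * Complex.exp (Complex.I * ((∑ i, ω k w i * x i : ℝ) : ℂ))).re) ^ 2 ∂μ) ∂P
      ≤ (∫ y, ‖fhat y‖ ^ 2 / p y) / K :=
  random_fourier_features_generalization_bound_general P d K hK μ f fhat hfhatint hf p hpmeas
    hpnonneg hpos hA ω hωmeas hlaw hindep
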